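/- (Lemma 1) Let X and Y be distinct strings over Σ, each of length at least 2, let p be an LMS-suffix occurrence of X in T and let q be an LMS-suffix occurrence of Y in T. If either (i) Y is a proper prefix of X, or (ii) neither of X and Y is a prefix of the other and X ≺ Y, then suffix(p) ≺ suffix(q). (In particular, if X is a proper prefix of Y, then suffix(q) ≺ suffix(p): occurrences of the shorter string yield lexicographically greater suffixes.) -/
import Mathlib


/-- Auxiliary S-type classification with explicit fuel `n - i`. -/
def STypeAux {α : Type*} [LinearOrder α] (T : ℕ → α) : ℕ → ℕ → Prop
  | 0, _ => True
  | k + 1, i => T i < T (i + 1) ∨ (T i = T (i + 1) ∧ STypeAux T k (i + 1))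

/-- Position `i` of `T[1..n]` is S-type. -/
def SType {α : Type*} [LinearOrder α] (T : ℕ → α) (n i : ℕ) : Prop :=
  STypeAux T (n - i) i

/-- Auxiliary L-type classification with explicit fuel `n - i`. -/
def LTypeAux {α : Type*} [LinearOrder α] (T : ℕ → α) : ℕ → ℕ → Prop
  | 0, _ => False
  | k + 1, i => T (i + 1) < T i ∨ (T i = T (i + 1) ∧ LTypeAux T k (i + 1))

/-- Position `i` of `T[1..n]` is L-type. -/
def LType {α : Type*} [LinearOrder α] (T : ℕ → α) (n i : ℕ) : Prop :=
  LTypeAux T (n - i) i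

/-- Position `i` of `T[1..n]` is LMS-type. -/
def LMSType {α : Type*} [LinearOrder α] (T : ℕ → α) (n i : ℕ) : Prop :=
  1 < i ∧ SType T n i ∧ LType T n (i - 1)

/-- `suf T n i` is the suffix `T[i..n]` of `T[1..n]` as a list. -/
def suf {α : Type*} (T : ℕ → α) (n i : ℕ) : List α :=
  (List.range (n + 1 - i)).map fun k => T (i + k)

/-- rank of suffix p among all suffixes of T[1..n]. -/
noncomputable def rnk {α : Type*} [LinearOrder α] (T : ℕ → α) (n p : ℕ) : ℕ :=
  1 + Set.ncard {q : ℕ | 1 ≤ q ∧ q ≤ n ∧ List.Lex (· < ·) (suf T n q) (suf T n p)}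

/-- `p` is an LMS-suffix occurrence of string `S` (|S| ≥ 2) in `T[1..n]`. -/
def IsLMSSuffixOcc {α : Type*} [LinearOrder α] (T : ℕ → α) (n : ℕ) (S : List α) (p : ℕ) : Prop :=
  1 ≤ p ∧ p + S.length - 1 ≤ n ∧
    ((List.range S.length).map fun k => T (p + k)) = S ∧
    LMSType T n (p + S.length - 1) ∧
    ∀ k, p < k → k < p + S.length - 1 → ¬ LMSType T n k

section Aux
variable {α : Type*} [LinearOrder α]

lemma sl_disj (T : ℕ → α) : ∀ k i, STypeAux T k i → LTypeAux T k i → False := by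
  intro k
  induction k with
  | zero => intro i _ h; exact h
  | succ k ih =>
    intro i hS hL
    rcases hS with h | ⟨he, hS⟩ <;> rcases hL with h' | ⟨he', hL⟩
    · exact lt_asymm h h'
    · exact h.ne he'
    · exact h'.ne he.symm
    · exact ih _ hS hL

lemma sl_total (T : ℕ → α) : ∀ k i, STypeAux T k i ∨ LTypeAux T k i := by
  intro k
  induction k with
  | zero => intro i; exact Or.inl trivial
  | succ k ih =>
    intro i
    rcases lt_trichotomy (T i) (T (i + 1)) with h | h | h
    · exact Or.inl (Or.inl h)
    · rcases ih (i + 1) with hS | hL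
      · exact Or.inl (Or.inr ⟨h, hS⟩)
      · exact Or.inr (Or.inr ⟨h, hL⟩)
    · exact Or.inr (Or.inl h)

lemma ltype_lt {T : ℕ → α} {n i : ℕ} (h : LType T n i) : i < n := by
  by_contra hc
  have h0 : n - i = 0 := by omega
  rw [LType, h0] at h
  exact h

lemma suf_split (T : ℕ → α) (n i d : ℕ) (h : d ≤ n + 1 - i) :
    suf T n i = ((List.range d).map fun k => T (i + k)) ++ suf T n (i + d) := by
  unfold suf
  rw [show n + 1 - i = d + (n + 1 - (i + d)) by omega, List.range_add, List.map_append,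
    List.map_map]
  congr 1
  apply List.map_congr_left
  intro k _
  simp [add_assoc]

lemma suf_cons (T : ℕ → α) (n i : ℕ) (h : i ≤ n) :
    suf T n i = T i :: suf T n (i + 1) := by
  rw [suf_split T n i 1 (by omega)]
  simp [List.range_succ]

lemma lex_append {r : α → α → Prop} (P : List α) {A B : List α} (h : List.Lex r A B) :
    List.Lex r (P ++ A) (P ++ B) := by
  induction P with
  | nil => exact h
  | cons a P ih => exact List.Lex.cons ih

lemma lex_ext {r : α → α → Prop} :
    ∀ {X Y : List α}, List.Lex r X Y → ¬ X <+: Y →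
      ∀ {A B : List α}, X <+: A → Y <+: B → List.Lex r A B := by
  intro X Y h
  induction h with
  | nil => intro hnp; exact absurd List.nil_prefix hnp
  | @rel a l₁ b l₂ hr =>
    intro _ A B hA hB
    obtain ⟨A', rfl⟩ := hA
    obtain ⟨B', rfl⟩ := hB
    exact List.Lex.rel hr
  | @cons a l₁ l₂ h ih =>
    intro hnp A B hA hB
    obtain ⟨A', rfl⟩ := hA
    obtain ⟨B', rfl⟩ := hB
    simp only [List.cons_append]
    refine List.Lex.cons (ih ?_ (List.prefix_append _ _) (List.prefix_append _ _))
    intro hp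
    exact hnp ⟨hp.choose, by rw [List.cons_append, hp.choose_spec]⟩

lemma key {T : ℕ → α} {n : ℕ} {sent : α} (hTn : T n = sent)
    (hT : ∀ i, 1 ≤ i → i < n → T i ≠ sent) :
    ∀ k i j, n - i ≤ k → 1 ≤ i → j ≤ n → T i = T j → LType T n i → SType T n j →
      List.Lex (· < ·) (suf T n i) (suf T n j) := by
  intro k
  induction k with
  | zero =>
    intro i j hk _ _ _ hL _
    have := ltype_lt hL
    omega
  | succ k ih =>
    intro i j hk hi hj heq hL hS
    have hin : i < n := ltype_lt hL
    have hjn : j < n := by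
      rcases lt_or_eq_of_le hj with h | h
      · exact h
      · exact absurd (by rw [heq, h, hTn]) (hT i hi hin)
    have hL' : LTypeAux T (n - i - 1 + 1) i := by
      rw [show n - i - 1 + 1 = n - i by omega]; exact hL
    have hS' : STypeAux T (n - j - 1 + 1) j := by
      rw [show n - j - 1 + 1 = n - j by omega]; exact hS
    rw [suf_cons T n i hin.le, suf_cons T n j hjn.le, heq]
    apply List.Lex.cons
    have hLi : LTypeAux T (n - i - 1) (i + 1) → LType T n (i + 1) := by
      intro h; rw [LType, show n - (i + 1) = n - i - 1 by omega]; exact h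
    have hSj : STypeAux T (n - j - 1) (j + 1) → SType T n (j + 1) := by
      intro h; rw [SType, show n - (j + 1) = n - j - 1 by omega]; exact h
    rcases hL' with hlt | ⟨heqi, hLi'⟩ <;> rcases hS' with hlt2 | ⟨heqj, hSj'⟩
    · rw [suf_cons T n (i + 1) (by omega), suf_cons T n (j + 1) (by omega)]
      exact List.Lex.rel (lt_trans (heq ▸ hlt) hlt2)
    · rw [suf_cons T n (i + 1) (by omega), suf_cons T n (j + 1) (by omega)]
      exact List.Lex.rel (heqj ▸ heq ▸ hlt)
    · rw [suf_cons T n (i + 1) (by omega), suf_cons T n (j + 1) (by omega)]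
      exact List.Lex.rel (heqi ▸ heq ▸ hlt2)
    · exact ih (i + 1) (j + 1) (by omega) (by omega) (by omega)
        (by rw [← heqi, heq, heqj]) (hLi hLi') (hSj hSj')

end Aux

/-- Lemma 1: let `p`, `q` be LMS-suffix occurrences in `T` of
distinct strings `X`, `Y` of length ≥ 2. If `Y` is a proper prefix of `X`, or
neither is a prefix of the other and `X ≺ Y`, then `suffix(p) ≺ suffix(q)`. -/
theorem stmt9 {α : Type*} [LinearOrder α] (T : ℕ → α) (n : ℕ) (sent : α)
    (hn : 2 ≤ n) (hTn : T n = sent)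
    (hsent : ∀ a : α, a ≠ sent → sent < a)
    (hT : ∀ i, 1 ≤ i → i < n → T i ≠ sent) :
    ∀ (X Y : List α) (p q : ℕ), X ≠ Y → 2 ≤ X.length → 2 ≤ Y.length →
      IsLMSSuffixOcc T n X p → IsLMSSuffixOcc T n Y q →
      ((Y <+: X ∧ Y ≠ X) ∨ (¬ X <+: Y ∧ ¬ Y <+: X ∧ List.Lex (· < ·) X Y)) →
      List.Lex (· < ·) (suf T n p) (suf T n q) := by
  intro X Y p q hne hX2 hY2 hoccX hoccY hcase
  obtain ⟨hp1, hpn, hXval, hXlms, hXno⟩ := hoccX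
  obtain ⟨hq1, hqn, hYval, hYlms, hYno⟩ := hoccY
  rcases hcase with ⟨hpref, hneYX⟩ | ⟨h1, h2, hlex⟩
  · -- case (i): Y proper prefix of X
    set m := Y.length with hm
    have hmX : m < X.length := by
      rcases lt_or_eq_of_le hpref.length_le with h | h
      · exact h
      · exact absurd (List.IsPrefix.eq_of_length hpref h) hneYX
    have hXv : ∀ k (hk : k < X.length), T (p + k) = X[k] := by
      intro k hk
      rw [List.getElem_of_eq hXval.symm hk, List.getElem_map, List.getElem_range]
    have hYv : ∀ k (hk : k < m), T (q + k) = Y[k] := by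
      intro k hk
      rw [List.getElem_of_eq hYval.symm hk, List.getElem_map, List.getElem_range]
    have hchar : ∀ k, k < m → T (p + k) = T (q + k) := by
      intro k hk
      rw [hXv k (by omega), hYv k hk, hpref.getElem hk]
    have hi0n : p + (m - 1) < n := by omega
    rw [show q + Y.length - 1 = q + (m - 1) by omega] at hYlms
    obtain ⟨hj1, hSj, hLjm⟩ := hYlms
    rw [show q + (m - 1) - 1 = q + (m - 2) by omega] at hLjm
    have hstr : T (q + (m - 1)) < T (q + (m - 2)) := by
      rw [LType, show n - (q + (m - 2)) = (n - (q + (m - 1))) + 1 by omega] at hLjm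
      simp only [LTypeAux] at hLjm
      rw [show q + (m - 2) + 1 = q + (m - 1) by omega] at hLjm
      rcases hLjm with h | ⟨_, h⟩
      · exact h
      · exact absurd h (fun h => sl_disj T _ _ hSj h)
    have hstrp : T (p + (m - 1)) < T (p + (m - 2)) := by
      rw [hchar (m - 1) (by omega), hchar (m - 2) (by omega)]
      exact hstr
    have hLp2 : LType T n (p + (m - 2)) := by
      rw [LType, show n - (p + (m - 2)) = (n - (p + (m - 1))) + 1 by omega]
      simp only [LTypeAux]
      rw [show p + (m - 2) + 1 = p + (m - 1) by omega]
      exact Or.inl hstrp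
    have hnotLMS : ¬ LMSType T n (p + (m - 1)) := hXno _ (by omega) (by omega)
    have hLp1 : LType T n (p + (m - 1)) := by
      rcases sl_total T (n - (p + (m - 1))) (p + (m - 1)) with hS | hL
      · exact absurd ⟨by omega, hS,
          by rw [show p + (m - 1) - 1 = p + (m - 2) by omega]; exact hLp2⟩ hnotLMS
      · exact hL
    rw [suf_split T n p (m - 1) (by omega), suf_split T n q (m - 1) (by omega)]
    rw [show ((List.range (m - 1)).map fun k => T (p + k))
        = ((List.range (m - 1)).map fun k => T (q + k)) by
      apply List.map_congr_left
      intro k hk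
      rw [List.mem_range] at hk
      exact hchar k (by omega)]
    apply lex_append
    exact key hTn hT (n - (p + (m - 1))) _ _ le_rfl (by omega) (by omega)
      (hchar (m - 1) (by omega)) hLp1 hSj
  · -- case (ii)
    have hXA : X <+: suf T n p := by
      rw [suf_split T n p X.length (by omega), hXval]
      exact List.prefix_append _ _
    have hYB : Y <+: suf T n q := by
      rw [suf_split T n q Y.length (by omega), hYval]
      exact List.prefix_append _ _
    exact lex_ext hlex h1 hXA hYB
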